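/- arXiv:2111.03925 — 4 statements merged into one kernel-verified Lean document; each statement's English description precedes it below -/
import Mathlib

section
/- Let S be an idempotent semiring and d: S → S an additive map satisfying the 2-fold tropical Leibniz relations, meaning that for all x, y ∈ S the bend relations of d(xy) ⊕ x·d(y) ⊕ y·d(x) hold (i.e., d(xy) ⊕ x·d(y) = x·d(y) ⊕ y·d(x) = d(xy) ⊕ y·d(x) = d(xy) ⊕ x·d(y) ⊕ y·d(x)). Then d satisfies the 3-fold tropical Leibniz relations: for all x, y, z ∈ S, the bend relations of d(xyz) ⊕ (dx)yz ⊕ x(dy)z ⊕ xy(dz) hold. -/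
/-- If an additive map on an idempotent semiring satisfies the 2-fold tropical
Leibniz relations (bend relations of `d(xy) ⊕ x·dy ⊕ y·dx`), then it satisfies
the 3-fold tropical Leibniz relations. -/
theorem tropical_leibniz_two_implies_three
    (S : Type*) [CommSemiring S] (hidem : ∀ a : S, a + a = a)
    (d : S → S) (hadd : ∀ x y : S, d (x + y) = d x + d y)
    (hleib : ∀ x y : S,
      (d (x * y) + x * d y + y * d x = x * d y + y * d x) ∧
      (d (x * y) + x * d y + y * d x = d (x * y) + y * d x) ∧
      (d (x * y) + x * d y + y * d x = d (x * y) + x * d y)) :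
    ∀ x y z : S,
      (d (x*y*z) + d x * y * z + x * d y * z + x * y * d z
        = d x * y * z + x * d y * z + x * y * d z) ∧
      (d (x*y*z) + d x * y * z + x * d y * z + x * y * d z
        = d (x*y*z) + x * d y * z + x * y * d z) ∧
      (d (x*y*z) + d x * y * z + x * d y * z + x * y * d z
        = d (x*y*z) + d x * y * z + x * y * d z) ∧
      (d (x*y*z) + d x * y * z + x * d y * z + x * y * d z
        = d (x*y*z) + d x * y * z + x * d y * z) := by
  intro x y z
  -- transitivity of the idempotent order (a ≤ b ↔ a + b = b)
  have tr : ∀ a b c : S, a + b = b → b + c = c → a + c = c := by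
    intro a b c h1 h2
    calc a + c = a + (b + c) := by rw [h2]
      _ = (a + b) + c := by ring
      _ = b + c := by rw [h1]
      _ = c := h2
  -- monotonicity of multiplication
  have mle : ∀ a b c : S, a + b = b → c * a + c * b = c * b := by
    intro a b c h; rw [← mul_add, h]
  -- monotonicity of addition
  have cle : ∀ a b c : S, a + b = b → (c + a) + (c + b) = c + b := by
    intro a b c h
    calc (c + a) + (c + b) = (c + c) + (a + b) := by ring
      _ = c + b := by rw [hidem, h]
  obtain ⟨p1, p2, p3⟩ := hleib (x*y) z
  obtain ⟨q1, q2, q3⟩ := hleib x y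
  -- facts from the pair (x*y, z)
  have hA : d (x*y*z) + (x*y*d z + z*d (x*y)) = x*y*d z + z*d (x*y) := by
    calc d (x*y*z) + (x*y*d z + z*d (x*y))
        = d (x*y*z) + x*y*d z + z*d (x*y) := by ring
      _ = x*y*d z + z*d (x*y) := p1
  have hD : x*y*d z + (d (x*y*z) + z*d (x*y)) = d (x*y*z) + z*d (x*y) := by
    calc x*y*d z + (d (x*y*z) + z*d (x*y))
        = d (x*y*z) + x*y*d z + z*d (x*y) := by ring
      _ = d (x*y*z) + z*d (x*y) := p2
  have hE : z*d (x*y) + (d (x*y*z) + x*y*d z) = d (x*y*z) + x*y*d z := by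
    calc z*d (x*y) + (d (x*y*z) + x*y*d z)
        = d (x*y*z) + x*y*d z + z*d (x*y) := by ring
      _ = d (x*y*z) + x*y*d z := p3
  -- facts from the pair (x, y), multiplied by z
  have q1' : d (x*y) + (x*d y + y*d x) = x*d y + y*d x := by
    calc d (x*y) + (x*d y + y*d x) = d (x*y) + x*d y + y*d x := by ring
      _ = x*d y + y*d x := q1
  have hEq : z*d (x*y) + (x*d y*z + d x*y*z) = x*d y*z + d x*y*z := by
    calc z*d (x*y) + (x*d y*z + d x*y*z)
        = z*(d (x*y)) + z*(x*d y + y*d x) := by ring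
      _ = z*(x*d y + y*d x) := mle _ _ z q1'
      _ = x*d y*z + d x*y*z := by ring
  have q2' : x*d y + (d (x*y) + y*d x) = d (x*y) + y*d x := by
    calc x*d y + (d (x*y) + y*d x) = d (x*y) + x*d y + y*d x := by ring
      _ = d (x*y) + y*d x := q2
  have hC : x*d y*z + (z*d (x*y) + d x*y*z) = z*d (x*y) + d x*y*z := by
    calc x*d y*z + (z*d (x*y) + d x*y*z)
        = z*(x*d y) + z*(d (x*y) + y*d x) := by ring
      _ = z*(d (x*y) + y*d x) := mle _ _ z q2'
      _ = z*d (x*y) + d x*y*z := by ring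
  have q3' : y*d x + (d (x*y) + x*d y) = d (x*y) + x*d y := by
    calc y*d x + (d (x*y) + x*d y) = d (x*y) + x*d y + y*d x := by ring
      _ = d (x*y) + x*d y := q3
  have hB : d x*y*z + (z*d (x*y) + x*d y*z) = z*d (x*y) + x*d y*z := by
    calc d x*y*z + (z*d (x*y) + x*d y*z)
        = z*(y*d x) + z*(d (x*y) + x*d y) := by ring
      _ = z*(d (x*y) + x*d y) := mle _ _ z q3'
      _ = z*d (x*y) + x*d y*z := by ring
  refine ⟨?_, ?_, ?_, ?_⟩
  · -- A ≤ B + C + D : A ≤ D + E ≤ D + (C + B)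
    have step : (x*y*d z + z*d (x*y)) + (x*y*d z + (x*d y*z + d x*y*z))
        = x*y*d z + (x*d y*z + d x*y*z) := cle _ _ _ hEq
    have h := tr _ _ _ hA step
    calc d (x*y*z) + d x * y * z + x * d y * z + x * y * d z
        = d (x*y*z) + (x*y*d z + (x*d y*z + d x*y*z)) := by ring
      _ = x*y*d z + (x*d y*z + d x*y*z) := h
      _ = d x * y * z + x * d y * z + x * y * d z := by ring
  · -- B ≤ A + C + D : B ≤ C + E ≤ C + (A + D)
    have hB' : d x*y*z + (x*d y*z + z*d (x*y)) = x*d y*z + z*d (x*y) := by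
      calc d x*y*z + (x*d y*z + z*d (x*y))
          = d x*y*z + (z*d (x*y) + x*d y*z) := by ring
        _ = z*d (x*y) + x*d y*z := hB
        _ = x*d y*z + z*d (x*y) := by ring
    have step : (x*d y*z + z*d (x*y)) + (x*d y*z + (d (x*y*z) + x*y*d z))
        = x*d y*z + (d (x*y*z) + x*y*d z) := cle _ _ _ hE
    have h := tr _ _ _ hB' step
    calc d (x*y*z) + d x * y * z + x * d y * z + x * y * d z
        = d x*y*z + (x*d y*z + (d (x*y*z) + x*y*d z)) := by ring
      _ = x*d y*z + (d (x*y*z) + x*y*d z) := h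
      _ = d (x*y*z) + x * d y * z + x * y * d z := by ring
  · -- C ≤ A + B + D : C ≤ B + E ≤ B + (A + D)
    have hC' : x*d y*z + (d x*y*z + z*d (x*y)) = d x*y*z + z*d (x*y) := by
      calc x*d y*z + (d x*y*z + z*d (x*y))
          = x*d y*z + (z*d (x*y) + d x*y*z) := by ring
        _ = z*d (x*y) + d x*y*z := hC
        _ = d x*y*z + z*d (x*y) := by ring
    have step : (d x*y*z + z*d (x*y)) + (d x*y*z + (d (x*y*z) + x*y*d z))
        = d x*y*z + (d (x*y*z) + x*y*d z) := cle _ _ _ hE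
    have h := tr _ _ _ hC' step
    calc d (x*y*z) + d x * y * z + x * d y * z + x * y * d z
        = x*d y*z + (d x*y*z + (d (x*y*z) + x*y*d z)) := by ring
      _ = d x*y*z + (d (x*y*z) + x*y*d z) := h
      _ = d (x*y*z) + d x * y * z + x * y * d z := by ring
  · -- D ≤ A + B + C : D ≤ A + E ≤ A + (C + B)
    have step : (d (x*y*z) + z*d (x*y)) + (d (x*y*z) + (x*d y*z + d x*y*z))
        = d (x*y*z) + (x*d y*z + d x*y*z) := cle _ _ _ hEq
    have h := tr _ _ _ hD step
    calc d (x*y*z) + d x * y * z + x * d y * z + x * y * d z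
        = x*y*d z + (d (x*y*z) + (x*d y*z + d x*y*z)) := by ring
      _ = d (x*y*z) + (x*d y*z + d x*y*z) := h
      _ = d (x*y*z) + d x * y * z + x * d y * z := by ring
end

section
/- The pair π: 𝔹[[t]] → 𝕋, where π sends a nonzero boolean power series with lowest term t^n to e^{-n} and the differential on 𝔹[[t]] is d(t^n) = t^{n-1} (d(1) = 0), is reduced: the only differential congruence on 𝔹[[t]] contained in ker π is the trivial (diagonal) congruence. Concretely: if a ≠ b in 𝔹[[t]], then there exists n ≥ 0 such that π(dⁿa) ≠ π(dⁿb). -/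
open scoped Classical

/-- The pair `π : 𝔹[[t]] → 𝕋` (boolean power series, i.e. subsets of ℕ, with
differential the shift) is reduced: if `a ≠ b` then some iterated derivative
separates them under `π`. -/
theorem boolean_power_series_pair_is_reduced :
    let d : Set ℕ → Set ℕ := fun W => {n | n + 1 ∈ W}
    let π : Set ℕ → ℝ := fun W => if W.Nonempty then Real.exp (-((sInf W : ℕ) : ℝ)) else 0
    ∀ a b : Set ℕ, a ≠ b → ∃ n : ℕ, π (d^[n] a) ≠ π (d^[n] b) := by
  intro d π a b hab
  have hd : ∀ (n : ℕ) (W : Set ℕ), d^[n] W = {m | m + n ∈ W} := by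
    intro n
    induction n with
    | zero => intro W; simp
    | succ k ih =>
      intro W
      rw [Function.iterate_succ_apply, ih]
      ext m
      simp only [d, Set.mem_setOf_eq, add_assoc]
  have key : ∀ A B : Set ℕ, 0 ∈ A → 0 ∉ B → π A ≠ π B := by
    intro A B hA hB
    have hπA : π A = 1 := by
      simp only [π]
      rw [if_pos ⟨0, hA⟩, Nat.sInf_eq_zero.mpr (Or.inl hA)]
      simp
    rw [hπA]
    simp only [π]
    split_ifs with h
    · have h1 : sInf B ≠ 0 := fun h0 => hB (h0 ▸ Nat.sInf_mem h)
      have h2 : (0 : ℝ) < ((sInf B : ℕ) : ℝ) := by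
        exact_mod_cast Nat.pos_of_ne_zero h1
      have h3 : Real.exp (-((sInf B : ℕ) : ℝ)) < 1 := by
        rw [Real.exp_lt_one_iff]; linarith
      intro hc; linarith [hc ▸ h3]
    · norm_num
  obtain ⟨n, hn⟩ : ∃ n, ¬(n ∈ a ↔ n ∈ b) := by
    by_contra h
    push_neg at h
    exact hab (Set.ext fun n => h n)
  refine ⟨n, ?_⟩
  rw [hd n a, hd n b]
  by_cases h : n ∈ a
  · have h' : n ∉ b := fun hb => hn ⟨fun _ => hb, fun _ => h⟩
    exact key _ _ (by simpa using h) (by simpa using h')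
  · have h' : n ∈ b := by
      by_contra h'
      exact hn ⟨fun ha => absurd ha h, fun hb => absurd hb h'⟩
    exact (key _ _ (by simpa using h') (by simpa using h)).symm
end

section
/- Let k be a differential ring with a differentially enhanced seminorm (ṽ, v) to a pair (S₁ → S₀). If p ∈ kⁿ is a solution of a differential polynomial f ∈ k{x₁,...,xₙ} (i.e., f(p) = 0, evaluating differential monomials using the differential of k), then the tropicalization trop(p) = (ṽ(p₁),...,ṽ(pₙ)) ∈ S₁ⁿ is a solution of trop(f): the sum ⊕_ε v(f_ε)·π(ṽ(p)^ε) over the differential monomials x^ε of f tropically vanishes, i.e., deleting any single maximal term leaves the sum unchanged (the sum satisfies its own bend relations). -/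
/-- Tropicalization of points sends solutions of a differential polynomial to
solutions of its tropicalization: if `f(p) = 0` then the tropicalized sum
`⊕_ε v(f_ε)·π(vt(p)^ε)` tropically vanishes. Differential polynomials in
`k{x₁,…,xₙ}` are encoded as multivariate polynomials in the variables
`d^j x_i`, i.e. in variables indexed by `Fin n × ℕ`. -/
theorem trop_of_solution_is_solution
    (k S₁ S₀ : Type*) [CommRing k] [CommSemiring S₁] [CommSemiring S₀]
    (hidem₀ : ∀ a : S₀, a + a = a) (hidem₁ : ∀ a : S₁, a + a = a)
    (dk : k → k) (hdk_add : ∀ x y : k, dk (x + y) = dk x + dk y)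
    (hdk_mul : ∀ x y : k, dk (x * y) = x * dk y + y * dk x)
    (d₁ : S₁ → S₁) (π : S₁ →+* S₀)
    (v : k → S₀) (vt : k → S₁)
    (hv0 : v 0 = 0) (hv1 : v 1 = 1) (hvneg : v (-1) = 1)
    (hvmul : ∀ a b : k, v (a * b) = v a * v b)
    (hvultra : ∀ a b : k, v (a + b) + v a + v b = v a + v b)
    (hπvt : ∀ x : k, π (vt x) = v x)
    (hvtd : ∀ x : k, d₁ (vt x) = vt (dk x))
    (n : ℕ) (f : MvPolynomial (Fin n × ℕ) k) (p : Fin n → k)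
    (hsol : MvPolynomial.eval (fun q : Fin n × ℕ => dk^[q.2] (p q.1)) f = 0) :
    ∀ ε ∈ f.support,
      (∑ ε' ∈ f.support,
          v (MvPolynomial.coeff ε' f) *
            π (ε'.prod fun q e => (d₁^[q.2] (vt (p q.1))) ^ e))
        = ∑ ε' ∈ f.support.erase ε,
            v (MvPolynomial.coeff ε' f) *
              π (ε'.prod fun q e => (d₁^[q.2] (vt (p q.1))) ^ e) := by
  intro ε hε
  -- the monoid hom version of v
  let V : k →* S₀ := { toFun := v, map_one' := hv1, map_mul' := hvmul }
  have hVneg : ∀ x : k, v (-x) = v x := by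
    intro x
    have : v (-1 * x) = v (-1) * v x := hvmul _ _
    simpa [hvneg] using this
  -- v absorbs the norm of a sum
  have habs : ∀ (s : Finset (Fin n × ℕ →₀ ℕ)) (a : (Fin n × ℕ →₀ ℕ) → k),
      v (∑ i ∈ s, a i) + ∑ i ∈ s, v (a i) = ∑ i ∈ s, v (a i) := by
    intro s a
    induction s using Finset.induction_on with
    | empty => simp [hv0]
    | @insert j s hj ih =>
      rw [Finset.sum_insert hj, Finset.sum_insert hj]
      have h1 : v (a j + ∑ i ∈ s, a i) + v (a j) + v (∑ i ∈ s, a i)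
          = v (a j) + v (∑ i ∈ s, a i) := hvultra _ _
      calc v (a j + ∑ i ∈ s, a i) + (v (a j) + ∑ i ∈ s, v (a i))
          = v (a j + ∑ i ∈ s, a i) + v (a j) + (v (∑ i ∈ s, a i) + ∑ i ∈ s, v (a i)) := by
            rw [ih]; ring
        _ = (v (a j) + v (∑ i ∈ s, a i)) + ∑ i ∈ s, v (a i) := by
            rw [← add_assoc, h1]
        _ = v (a j) + (v (∑ i ∈ s, a i) + ∑ i ∈ s, v (a i)) := by ring
        _ = v (a j) + ∑ i ∈ s, v (a i) := by rw [ih]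
  -- iterated differential commutes with vt
  have hd : ∀ (j : ℕ) (x : k), d₁^[j] (vt x) = vt (dk^[j] x) := by
    intro j
    induction j with
    | zero => intro x; simp
    | succ j ih =>
      intro x
      rw [Function.iterate_succ_apply, Function.iterate_succ_apply, hvtd, ih]
  -- the evaluated terms in k
  set a : (Fin n × ℕ →₀ ℕ) → k :=
    fun ε' => MvPolynomial.coeff ε' f * ε'.prod fun q e => (dk^[q.2] (p q.1)) ^ e with ha
  have hterm : ∀ ε' : Fin n × ℕ →₀ ℕ,
      v (MvPolynomial.coeff ε' f) *
        π (ε'.prod fun q e => (d₁^[q.2] (vt (p q.1))) ^ e) = v (a ε') := by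
    intro ε'
    have h1 : π (ε'.prod fun q e => (d₁^[q.2] (vt (p q.1))) ^ e)
        = ε'.prod fun q e => (v (dk^[q.2] (p q.1))) ^ e := by
      rw [Finsupp.prod, map_prod]
      refine Finset.prod_congr rfl fun q _ => ?_
      rw [map_pow, hd, hπvt]
    have h2 : v (ε'.prod fun q e => (dk^[q.2] (p q.1)) ^ e)
        = ε'.prod fun q e => (v (dk^[q.2] (p q.1))) ^ e := by
      rw [Finsupp.prod, Finsupp.prod, show (v : k → S₀) = ⇑V from rfl, map_prod]
      exact Finset.prod_congr rfl fun q _ => map_pow V _ _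
    rw [h1, ha, hvmul, h2]
  have hsum : ∑ ε' ∈ f.support, a ε' = 0 := by
    rw [← hsol, MvPolynomial.eval_eq]
    rfl
  -- split off the ε term
  have hsplit : ∑ ε' ∈ f.support, v (a ε')
      = v (a ε) + ∑ ε' ∈ f.support.erase ε, v (a ε') :=
    (Finset.add_sum_erase _ _ hε).symm
  have haε : a ε = -∑ ε' ∈ f.support.erase ε, a ε' := by
    have := Finset.add_sum_erase f.support a hε
    rw [hsum] at this
    exact eq_neg_of_add_eq_zero_left this
  have hvaε : v (a ε) = v (∑ ε' ∈ f.support.erase ε, a ε') := by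
    rw [haε, hVneg]
  calc (∑ ε' ∈ f.support,
          v (MvPolynomial.coeff ε' f) *
            π (ε'.prod fun q e => (d₁^[q.2] (vt (p q.1))) ^ e))
      = ∑ ε' ∈ f.support, v (a ε') := Finset.sum_congr rfl fun ε' _ => hterm ε'
    _ = v (∑ ε' ∈ f.support.erase ε, a ε') + ∑ ε' ∈ f.support.erase ε, v (a ε') := by
        rw [hsplit, hvaε]
    _ = ∑ ε' ∈ f.support.erase ε, v (a ε') := habs _ _
    _ = ∑ ε' ∈ f.support.erase ε,
          v (MvPolynomial.coeff ε' f) *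
            π (ε'.prod fun q e => (d₁^[q.2] (vt (p q.1))) ^ e) :=
        Finset.sum_congr rfl fun ε' _ => (hterm ε').symm
end

section
/- In an idempotent semiring S, suppose for a finite index family {a_i}_{i∈Λ} the 3-element bend relations propagate as follows: for every three elements u, v, w of a distinguished collection of 'null sets' of size 3 the bend relations u ⊕ v ⊕ w = u ⊕ v = v ⊕ w = u ⊕ w hold. Specifically, prove the induction step used in Lemma 5.8: if x_{a₁} ⊕ x_{a₂} ⊕ x_{-b} satisfies its bend relations, x_b = x_{-b}, and x_b ⊕ x_{a₃} ⊕ ... ⊕ x_{a_{n+1}} satisfies its bend relations (where b = a₁ + a₂), then x_{a₁} ⊕ x_{a₂} ⊕ ... ⊕ x_{a_{n+1}} = x_{a₂} ⊕ ... ⊕ x_{a_{n+1}}; i.e., any single term can be deleted from the (n+1)-fold sum. -/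
/-- The induction step of Lemma 5.8: bend relations for null sets of size 3 and
size n propagate to a null set of size n+1, allowing the deletion of a single
term from the (n+1)-fold sum. -/
theorem bend_relations_induction_step
    (S : Type*) [CommSemiring S] (hidem : ∀ a : S, a + a = a)
    (m : ℕ) (xa1 xa2 xb xmb : S) (rest : Fin m → S)
    (h1a : xa1 + xa2 + xmb = xa1 + xa2)
    (h1b : xa1 + xa2 + xmb = xa2 + xmb)
    (h1c : xa1 + xa2 + xmb = xa1 + xmb)
    (h2 : xb = xmb)
    (h3a : xb + ∑ i, rest i = ∑ i, rest i)
    (h3b : ∀ j : Fin m, xb + ∑ i, rest i = xb + ∑ i ∈ Finset.univ.erase j, rest i) :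
    xa1 + xa2 + ∑ i, rest i = xa2 + ∑ i, rest i := by
  subst h2
  calc xa1 + xa2 + ∑ i, rest i = xa1 + xa2 + (xb + ∑ i, rest i) := by rw [h3a]
    _ = (xa1 + xa2 + xb) + ∑ i, rest i := by ring
    _ = (xa2 + xb) + ∑ i, rest i := by rw [h1b]
    _ = xa2 + (xb + ∑ i, rest i) := by ring
    _ = xa2 + ∑ i, rest i := by rw [h3a]
end
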